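/- Fix k ≥ 2. For g a series in z^k with nonzero constant term, the k-Riordan multiplication rule applied to arrays of the form (g(z^k), z, ..., z, f(z^k)/z^{k-1}) gives (g(z^k), z,...,z, f(z^k)/z^{k-1}) * (G(z^k), z,...,z, F(z^k)/z^{k-1}) = (g(z^k)·G(f(z^k)), z,...,z, F(f(z^k))/z^{k-1}), where the k-th root h = (f(z^k))^{1/k} satisfies h^k = f(z^k). -/

import Mathlib

open PowerSeries

variable {K : Type*} [Field K]

/-- Composition (substitution) of formal power series: `pcomp A f = A ∘ f`,
intended for `f` with zero constant term, where `coeff K n (f ^ k) = 0` for `k > n`. -/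
noncomputable def pcomp (A f : PowerSeries K) : PowerSeries K :=
  PowerSeries.mk fun n => ∑ k ∈ Finset.range (n + 1), coeff k A * coeff n (f ^ k)

/-- A formal power series is even if all its odd coefficients vanish. -/
def IsEvenPS (g : PowerSeries K) : Prop := ∀ n : ℕ, Odd n → coeff n g = 0

/-- A formal power series is odd if all its even coefficients vanish. -/
def IsOddPS (f : PowerSeries K) : Prop := ∀ n : ℕ, Even n → coeff n f = 0

lemma pcoeff_pow_zero (u : PowerSeries K) (hu : constantCoeff u = 0) {n m : ℕ}
    (h : n < m) : coeff n (u ^ m) = 0 := by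
  have hd : (X : K⟦X⟧) ^ m ∣ u ^ m := pow_dvd_pow_of_dvd (X_dvd_iff.mpr hu) m
  exact X_pow_dvd_iff.mp hd n h

lemma coeff_pcomp (A u : PowerSeries K) (n : ℕ) :
    coeff n (pcomp A u) = ∑ j ∈ Finset.range (n + 1), coeff j A * coeff n (u ^ j) := by
  simp [pcomp]

lemma coeff_aeval (u : PowerSeries K) (hu : constantCoeff u = 0) (P : Polynomial K) (n : ℕ) :
    coeff n (Polynomial.aeval u P)
      = ∑ j ∈ Finset.range (n + 1), P.coeff j * coeff n (u ^ j) := by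
  set M := max (P.natDegree + 1) (n + 1) with hM
  rw [Polynomial.aeval_eq_sum_range'
      (lt_of_lt_of_le (Nat.lt_succ_self _) (le_max_left _ _)) u, map_sum]
  simp only [LinearMap.map_smul, smul_eq_mul]
  symm
  apply Finset.sum_subset (Finset.range_subset_range.mpr (le_max_right _ _))
  intro j _ hjn
  have hnj : n < j := by
    simp only [Finset.mem_range] at hjn; omega
  rw [pcoeff_pow_zero u hu hnj, mul_zero]

lemma dvd_of_agree {n : ℕ} {w w' : PowerSeries K}
    (h : ∀ m ≤ n, coeff m w = coeff m w') : (X : K⟦X⟧) ^ (n + 1) ∣ w - w' :=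
  X_pow_dvd_iff.mpr fun m hm => by rw [map_sub, h m (Nat.lt_succ_iff.mp hm), sub_self]

lemma coeff_aeval_congr_arg {n : ℕ} (P : Polynomial K) {w w' : PowerSeries K}
    (h : (X : K⟦X⟧) ^ (n + 1) ∣ w - w') :
    coeff n (Polynomial.aeval w P) = coeff n (Polynomial.aeval w' P) := by
  have hd : w - w' ∣ Polynomial.aeval w P - Polynomial.aeval w' P := by
    rw [Polynomial.aeval_def, Polynomial.aeval_def, ← Polynomial.eval_map,
      ← Polynomial.eval_map]
    exact Polynomial.sub_dvd_eval_sub _ _ _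
  have h2 := X_pow_dvd_iff.mp (h.trans hd) n (Nat.lt_succ_self n)
  rw [map_sub, sub_eq_zero] at h2
  exact h2

lemma coeff_pcomp_trunc (A u : PowerSeries K) (hu : constantCoeff u = 0) {n N : ℕ}
    (h : n < N) :
    coeff n (pcomp A u) = coeff n (Polynomial.aeval u (trunc N A)) := by
  rw [coeff_aeval u hu, coeff_pcomp]
  refine Finset.sum_congr rfl fun j hj => ?_
  have hjN : j < N := lt_of_lt_of_le (Finset.mem_range.mp hj) h
  rw [coeff_trunc, if_pos hjN]

lemma pcomp_mul (A B u : PowerSeries K) (hu : constantCoeff u = 0) :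
    pcomp (A * B) u = pcomp A u * pcomp B u := by
  ext n
  calc coeff n (pcomp (A * B) u)
      = coeff n (Polynomial.aeval u (trunc (n + 1) (A * B))) :=
        coeff_pcomp_trunc _ _ hu (Nat.lt_succ_self n)
    _ = coeff n (Polynomial.aeval u (trunc (n + 1) A * trunc (n + 1) B)) := by
        rw [coeff_aeval u hu, coeff_aeval u hu]
        refine Finset.sum_congr rfl fun j hj => ?_
        have hjn : j ≤ n := Nat.lt_succ_iff.mp (Finset.mem_range.mp hj)
        congr 1
        rw [coeff_trunc, if_pos (by omega), Polynomial.coeff_mul, PowerSeries.coeff_mul]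
        refine Finset.sum_congr rfl fun ij hij => ?_
        have hij' := Finset.HasAntidiagonal.mem_antidiagonal.mp hij
        rw [coeff_trunc, coeff_trunc, if_pos (by omega), if_pos (by omega)]
    _ = coeff n (Polynomial.aeval u (trunc (n + 1) A) * Polynomial.aeval u (trunc (n + 1) B)) := by
        rw [map_mul]
    _ = coeff n (pcomp A u * pcomp B u) := by
        rw [PowerSeries.coeff_mul, PowerSeries.coeff_mul]
        refine Finset.sum_congr rfl fun ij hij => ?_
        have hij' := Finset.HasAntidiagonal.mem_antidiagonal.mp hij
        rw [coeff_pcomp_trunc A u hu (show ij.1 < n + 1 by omega),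
          coeff_pcomp_trunc B u hu (show ij.2 < n + 1 by omega)]

lemma pcomp_one (u : PowerSeries K) : pcomp 1 u = 1 := by
  ext n
  rw [coeff_pcomp, Finset.sum_eq_single 0]
  · simp
  · intro j _ hj0
    rw [PowerSeries.coeff_one, if_neg hj0, zero_mul]
  · intro h0
    exact absurd (Finset.mem_range.mpr (Nat.succ_pos n)) h0

lemma pcomp_X (u : PowerSeries K) (hu : constantCoeff u = 0) : pcomp X u = u := by
  ext n
  rw [coeff_pcomp, Finset.sum_eq_single 1]
  · rw [PowerSeries.coeff_X, if_pos rfl, one_mul, pow_one]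
  · intro j _ hj1
    rw [PowerSeries.coeff_X, if_neg hj1, zero_mul]
  · intro h1
    have hn0 : n = 0 := by
      by_contra hc
      exact h1 (Finset.mem_range.mpr (by omega))
    subst hn0
    rw [PowerSeries.coeff_X, if_pos rfl, one_mul, pow_one,
      PowerSeries.coeff_zero_eq_constantCoeff_apply, hu]

lemma pcomp_pow (A u : PowerSeries K) (hu : constantCoeff u = 0) (m : ℕ) :
    pcomp (A ^ m) u = pcomp A u ^ m := by
  induction m with
  | zero => simpa using pcomp_one u
  | succ m ih => rw [pow_succ, pow_succ, pcomp_mul _ _ _ hu, ih]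

lemma constantCoeff_pcomp (A u : PowerSeries K) :
    constantCoeff (pcomp A u) = constantCoeff A := by
  rw [← PowerSeries.coeff_zero_eq_constantCoeff_apply, coeff_pcomp]
  simp

lemma pcomp_assoc (A u v : PowerSeries K) (hu : constantCoeff u = 0)
    (hv : constantCoeff v = 0) :
    pcomp (pcomp A u) v = pcomp A (pcomp u v) := by
  have hw : constantCoeff (pcomp u v) = 0 := by rw [constantCoeff_pcomp]; exact hu
  ext n
  set P := trunc (n + 1) A with hP
  set U := trunc (n + 1) u with hU
  have hUu : ∀ p ≤ n, coeff p ((U : PowerSeries K)) = coeff p u := fun p hp => by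
    rw [Polynomial.coeff_coe, hU, coeff_trunc, if_pos (by omega)]
  have hR : coeff n (pcomp A (pcomp u v))
      = coeff n (Polynomial.aeval (Polynomial.aeval v U) P) := by
    rw [coeff_pcomp_trunc A (pcomp u v) hw (Nat.lt_succ_self n)]
    refine coeff_aeval_congr_arg P (dvd_of_agree fun m hm => ?_)
    exact coeff_pcomp_trunc u v hv (by omega)
  have hL : coeff n (pcomp (pcomp A u) v)
      = coeff n (Polynomial.aeval v (P.comp U)) := by
    rw [coeff_pcomp_trunc (pcomp A u) v hv (Nat.lt_succ_self n), coeff_aeval v hv,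
      coeff_aeval v hv]
    refine Finset.sum_congr rfl fun p hp => ?_
    have hpn : p ≤ n := Nat.lt_succ_iff.mp (Finset.mem_range.mp hp)
    congr 1
    rw [coeff_trunc, if_pos (by omega), coeff_pcomp_trunc A u hu (show p < n + 1 by omega)]
    have hcoe : ((P.comp U : Polynomial K) : PowerSeries K)
        = Polynomial.aeval ((U : PowerSeries K)) P := by
      rw [Polynomial.comp_eq_aeval]
      have h3 := Polynomial.aeval_algHom_apply (Polynomial.coeToPowerSeries.algHom K) U P
      simp only [Polynomial.coeToPowerSeries.algHom_apply, Algebra.algebraMap_self,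
        PowerSeries.map_id, id_eq] at h3
      exact h3.symm
    calc coeff p (Polynomial.aeval u P)
        = coeff p (Polynomial.aeval ((U : PowerSeries K)) P) :=
          coeff_aeval_congr_arg P (dvd_of_agree fun m hm => (hUu m (le_trans hm hpn)).symm)
      _ = (P.comp U).coeff p := by rw [← hcoe, Polynomial.coeff_coe]
  rw [hL, hR, Polynomial.aeval_comp]

/-- k-Riordan multiplication of aerated arrays: with fc = f(zᵏ)/zᵏ⁻¹,
Fc = F(zᵏ)/zᵏ⁻¹, h the k-th root of f₁···f_k = f(zᵏ) (zero constant term,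
nonzero linear coefficient), a = z/h, b = fc/h, the product
(g(zᵏ), z,…,z, fc) * (G(zᵏ), z,…,z, Fc) equals
(g(zᵏ)·G(f(zᵏ)), z,…,z, F(f(zᵏ))/zᵏ⁻¹). -/
theorem stmt14 (k : ℕ) (hk : 2 ≤ k) (g f G F fc Fc h a b : PowerSeries K)
    (hg : constantCoeff g ≠ 0)
    (hf0 : constantCoeff f = 0) (hf1 : coeff 1 f ≠ 0)
    (hG : constantCoeff G ≠ 0)
    (hF0 : constantCoeff F = 0) (hF1 : coeff 1 F ≠ 0)
    (hfc : X ^ (k - 1) * fc = pcomp f (X ^ k))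
    (hFc : X ^ (k - 1) * Fc = pcomp F (X ^ k))
    (hh0 : constantCoeff h = 0) (hh1 : coeff 1 h ≠ 0)
    (hsq : h ^ k = pcomp f (X ^ k))
    (ha : a * h = X) (hb : b * h = fc) :
    pcomp g (X ^ k) * pcomp (pcomp G (X ^ k)) h
        = pcomp g (X ^ k) * pcomp G (pcomp f (X ^ k)) ∧
    a * pcomp X h = X ∧
    X ^ (k - 1) * (b * pcomp Fc h) = pcomp F (pcomp f (X ^ k)) := by
  have hXk : constantCoeff ((X : PowerSeries K) ^ k) = 0 := by
    rw [map_pow, constantCoeff_X, zero_pow (by omega)]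
  have hXkh : pcomp (X ^ k) h = h ^ k := by
    rw [pcomp_pow _ _ hh0, pcomp_X _ hh0]
  have hkey : ∀ A : PowerSeries K, pcomp (pcomp A (X ^ k)) h = pcomp A (pcomp f (X ^ k)) := by
    intro A
    rw [pcomp_assoc A (X ^ k) h hXk hh0, hXkh, hsq]
  have hne : h ≠ 0 := by
    intro hc
    exact hh1 (by rw [hc, map_zero])
  refine ⟨by rw [hkey G], by rw [pcomp_X _ hh0, ha], ?_⟩
  -- part 3
  have hXb : X ^ (k - 1) * b = h ^ (k - 1) := by
    have h1 : (X ^ (k - 1) * b) * h = h ^ (k - 1) * h := by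
      rw [mul_assoc, hb, hfc, ← hsq, ← pow_succ]
      congr 1
      omega
    exact mul_right_cancel₀ hne h1
  calc X ^ (k - 1) * (b * pcomp Fc h) = (X ^ (k - 1) * b) * pcomp Fc h := by ring
    _ = h ^ (k - 1) * pcomp Fc h := by rw [hXb]
    _ = pcomp (X ^ (k - 1)) h * pcomp Fc h := by rw [pcomp_pow _ _ hh0, pcomp_X _ hh0]
    _ = pcomp (X ^ (k - 1) * Fc) h := (pcomp_mul _ _ _ hh0).symm
    _ = pcomp F (pcomp f (X ^ k)) := by rw [hFc, hkey F]
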